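/- Assume b = −e and b ≠ 0 (with a, d ∈ ℝ arbitrary). Let u be a solution of the Longstaff–Schwartz equation on Ω, and let ε ∈ ℝ. Then the function w(x,y,t) = (1 − bε·e^{-bt})^{-2d} · exp( 2b²ε·e^{-bt}·y/(1 − bε·e^{-bt}) ) · u( x/(1 − bε·e^{-bt}), y/(1 − bε·e^{-bt}), t + ln(1 − bε·e^{-bt})/b ) satisfies the Longstaff–Schwartz equation at every point (x,y,t) ∈ Ω with 1 − bε·e^{-bt} > 0. -/

import Mathlib

/-- Partial derivative in `x`. -/
noncomputable def pdX (u : ℝ → ℝ → ℝ → ℝ) (x y t : ℝ) : ℝ := deriv (fun z => u z y t) x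

/-- Partial derivative in `y`. -/
noncomputable def pdY (u : ℝ → ℝ → ℝ → ℝ) (x y t : ℝ) : ℝ := deriv (fun z => u x z t) y

/-- Partial derivative in `t`. -/
noncomputable def pdT (u : ℝ → ℝ → ℝ → ℝ) (x y t : ℝ) : ℝ := deriv (fun z => u x y z) t

/-- Second partial derivative in `x`. -/
noncomputable def pdXX (u : ℝ → ℝ → ℝ → ℝ) (x y t : ℝ) : ℝ := deriv (fun z => pdX u z y t) x

/-- Second partial derivative in `y`. -/
noncomputable def pdYY (u : ℝ → ℝ → ℝ → ℝ) (x y t : ℝ) : ℝ := deriv (fun z => pdY u x z t) y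

/-- The domain `Ω = {(x,y,t) : x > 0, y > 0}`. -/
def Omega : Set (ℝ × ℝ × ℝ) := {p | 0 < p.1 ∧ 0 < p.2.1}

/-- The Longstaff–Schwartz (Kolmogorov backward) equation
`u_t = −((a−bx)·u_x + (d−ey)·u_y + (x/2)·u_xx + (y/2)·u_yy)` holds at the point `(x,y,t)`. -/
def LSEq (a b d e : ℝ) (u : ℝ → ℝ → ℝ → ℝ) (x y t : ℝ) : Prop :=
  pdT u x y t =
    -((a - b * x) * pdX u x y t + (d - e * y) * pdY u x y t +
      x / 2 * pdXX u x y t + y / 2 * pdYY u x y t)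

/-- `u` is a solution of the Longstaff–Schwartz equation on `Ω`: it is C² on `Ω` and
satisfies the equation at every point of `Ω`. -/
def IsLSSolution (a b d e : ℝ) (u : ℝ → ℝ → ℝ → ℝ) : Prop :=
  ContDiffOn ℝ 2 (fun p : ℝ × ℝ × ℝ => u p.1 p.2.1 p.2.2) Omega ∧
  ∀ x y t : ℝ, 0 < x → 0 < y → LSEq a b d e u x y t

/-!
Put `φ(t) = 1 − bε e^{−bt}`, so that `φ' = b(1 − φ)`, and `τ(t) = t + log φ(t) / b`, so that
`τ' = 1/φ`. The transform is `w(x,y,t) = V(x/φ, y/φ, t)` with the gauged solution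
`V(ξ,η,t) = φ^{−2d} e^{2b(1−φ)η} u(ξ,η,τ)`. Its spatial derivatives are those of `V`, rescaled by
powers of `1/φ`, and the `η`-derivatives of the gauge factor are explicit; the time derivative
follows from the chain rule along `t ↦ (x/φ, y/φ, τ)`. Substituting the equation for `u` at
`(x/φ, y/φ, τ)` leaves an algebraic identity, which holds because `e = −b`.
-/

open Real Topology

section Scaling

variable {𝕜 E : Type*} [NontriviallyNormedField 𝕜] [NormedAddCommGroup E] [NormedSpace 𝕜 E]

theorem deriv_comp_div_const (f : 𝕜 → E) (c x : 𝕜) :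
    deriv (fun z => f (z / c)) x = c⁻¹ • deriv f (x / c) := by
  simpa only [div_eq_inv_mul] using deriv_comp_mul_left c⁻¹ f x

end Scaling

section ExpMul

variable {f : ℝ → ℝ} {f' x : ℝ}

theorem HasDerivAt.const_mul_exp_mul (c k : ℝ) (hf : HasDerivAt f f' x) :
    HasDerivAt (fun z => c * Real.exp (k * z) * f z)
      (c * Real.exp (k * x) * (k * f x + f')) x :=
  ((((hasDerivAt_id' x).const_mul k).exp.const_mul c).mul hf).congr_deriv (by ring)

theorem deriv_deriv_const_mul_exp_mul (c k : ℝ) (hf : ContDiffAt ℝ 2 f x) :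
    deriv (deriv fun z => c * exp (k * z) * f z) x =
      c * exp (k * x) * (k ^ 2 * f x + 2 * k * deriv f x + deriv (deriv f) x) := by
  have hnear : (deriv fun z => c * exp (k * z) * f z) =ᶠ[𝓝 x]
      fun z => c * exp (k * z) * (k * f z + deriv f z) := by
    filter_upwards [hf.eventually (by simp)] with z hz
    exact (HasDerivAt.const_mul_exp_mul c k (hz.differentiableAt two_ne_zero).hasDerivAt).deriv
  have hf' : HasDerivAt f (deriv f x) x := (hf.differentiableAt two_ne_zero).hasDerivAt
  have hf'' : HasDerivAt (deriv f) (deriv (deriv f) x) x :=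
    ((hf.derivWithin (m := 1) (by norm_num)).differentiableAt one_ne_zero).hasDerivAt
  have hg : HasDerivAt (fun z => k * f z + deriv f z) (k * deriv f x + deriv (deriv f) x) x :=
    (hf'.const_mul k).add hf''
  rw [hnear.deriv_eq, (hg.const_mul_exp_mul c k).deriv]
  ring

end ExpMul

theorem hasDerivAt_comp₃ {u : ℝ → ℝ → ℝ → ℝ} {f g h : ℝ → ℝ} {f' g' h' t : ℝ}
    (hu : DifferentiableAt ℝ (fun p : ℝ × ℝ × ℝ => u p.1 p.2.1 p.2.2) (f t, g t, h t))
    (hf : HasDerivAt f f' t) (hg : HasDerivAt g g' t) (hh : HasDerivAt h h' t) :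
    HasDerivAt (fun s => u (f s) (g s) (h s))
      (f' * pdX u (f t) (g t) (h t) + g' * pdY u (f t) (g t) (h t) +
        h' * pdT u (f t) (g t) (h t)) t := by
  set L := fderiv ℝ (fun p : ℝ × ℝ × ℝ => u p.1 p.2.1 p.2.2) (f t, g t, h t)
  have hL : HasFDerivAt (fun p : ℝ × ℝ × ℝ => u p.1 p.2.1 p.2.2) L (f t, g t, h t) :=
    hu.hasFDerivAt
  have hx : pdX u (f t) (g t) (h t) = L (1, 0, 0) := by
    have hline : HasDerivAt (fun z => ((z, g t, h t) : ℝ × ℝ × ℝ)) (1, 0, 0) (f t) :=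
      (hasDerivAt_id _).prodMk ((hasDerivAt_const _ _).prodMk (hasDerivAt_const _ _))
    exact (hL.comp_hasDerivAt _ hline).deriv
  have hy : pdY u (f t) (g t) (h t) = L (0, 1, 0) := by
    have hline : HasDerivAt (fun z => ((f t, z, h t) : ℝ × ℝ × ℝ)) (0, 1, 0) (g t) :=
      (hasDerivAt_const _ _).prodMk ((hasDerivAt_id _).prodMk (hasDerivAt_const _ _))
    exact (hL.comp_hasDerivAt _ hline).deriv
  have ht : pdT u (f t) (g t) (h t) = L (0, 0, 1) := by
    have hline : HasDerivAt (fun z => ((f t, g t, z) : ℝ × ℝ × ℝ)) (0, 0, 1) (h t) :=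
      (hasDerivAt_const _ _).prodMk ((hasDerivAt_const _ _).prodMk (hasDerivAt_id _))
    exact (hL.comp_hasDerivAt _ hline).deriv
  have hcurve : HasDerivAt (fun s => ((f s, g s, h s) : ℝ × ℝ × ℝ)) (f', g', h') t :=
    hf.prodMk (hg.prodMk hh)
  refine (hL.comp_hasDerivAt t hcurve).congr_deriv ?_
  rw [hx, hy, ht]
  simp only [← smul_eq_mul, ← map_smul, ← map_add]
  congr 1
  simp

section SpatialScaling

variable (v : ℝ → ℝ → ℝ → ℝ) (c : ℝ → ℝ) (x y t : ℝ)

theorem pdX_comp_div :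
    pdX (fun x y t => v (x / c t) (y / c t) t) x y t = (c t)⁻¹ * pdX v (x / c t) (y / c t) t :=
  deriv_comp_div_const (fun ξ => v ξ (y / c t) t) (c t) x

theorem pdY_comp_div :
    pdY (fun x y t => v (x / c t) (y / c t) t) x y t = (c t)⁻¹ * pdY v (x / c t) (y / c t) t :=
  deriv_comp_div_const (fun η => v (x / c t) η t) (c t) y

theorem pdXX_comp_div :
    pdXX (fun x y t => v (x / c t) (y / c t) t) x y t =
      (c t)⁻¹ ^ 2 * pdXX v (x / c t) (y / c t) t := by
  simp only [pdXX, pdX_comp_div]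
  rw [deriv_const_mul_field, deriv_comp_div_const (fun ξ => pdX v ξ (y / c t) t), smul_eq_mul]
  ring

theorem pdYY_comp_div :
    pdYY (fun x y t => v (x / c t) (y / c t) t) x y t =
      (c t)⁻¹ ^ 2 * pdYY v (x / c t) (y / c t) t := by
  simp only [pdYY, pdY_comp_div]
  rw [deriv_const_mul_field, deriv_comp_div_const (fun η => pdY v (x / c t) η t), smul_eq_mul]
  ring

end SpatialScaling

noncomputable def lsTime (b : ℝ) (φ : ℝ → ℝ) (t : ℝ) : ℝ := t + log (φ t) / b

noncomputable def lsGauge (b d : ℝ) (φ : ℝ → ℝ) (u : ℝ → ℝ → ℝ → ℝ) : ℝ → ℝ → ℝ → ℝ :=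
  fun ξ η t => φ t ^ (-(2 * d)) * exp (2 * b * (1 - φ t) * η) * u ξ η (lsTime b φ t)

noncomputable def lsTransform (b d : ℝ) (φ : ℝ → ℝ) (u : ℝ → ℝ → ℝ → ℝ) : ℝ → ℝ → ℝ → ℝ :=
  fun x y t => lsGauge b d φ u (x / φ t) (y / φ t) t

section Transform

variable {b d : ℝ} {φ : ℝ → ℝ} {u : ℝ → ℝ → ℝ → ℝ} {x y t : ℝ}

theorem hasDerivAt_lsTime (hb : b ≠ 0) (hφ : HasDerivAt φ (b * (1 - φ t)) t) (hp : 0 < φ t) :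
    HasDerivAt (lsTime b φ) (φ t)⁻¹ t :=
  ((hasDerivAt_id' t).add ((hφ.log hp.ne').div_const b)).congr_deriv (by field_simp; ring)

theorem hasDerivAt_lsTransform_time (hb : b ≠ 0) (hφ : HasDerivAt φ (b * (1 - φ t)) t)
    (hp : 0 < φ t)
    (hu : DifferentiableAt ℝ (fun p : ℝ × ℝ × ℝ => u p.1 p.2.1 p.2.2)
      (x / φ t, y / φ t, lsTime b φ t)) :
    HasDerivAt (fun s => lsTransform b d φ u x y s)
      (φ t ^ (-(2 * d)) * exp (2 * b * (1 - φ t) * (y / φ t)) *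
        (-(2 * b * (1 - φ t) * (d * φ t + b * y)) / φ t ^ 2 * u (x / φ t) (y / φ t) (lsTime b φ t)
          - b * (1 - φ t) / φ t ^ 2 * (x * pdX u (x / φ t) (y / φ t) (lsTime b φ t) +
            y * pdY u (x / φ t) (y / φ t) (lsTime b φ t))
          + pdT u (x / φ t) (y / φ t) (lsTime b φ t) / φ t)) t := by
  have hA : HasDerivAt (fun s => φ s ^ (-(2 * d)))
      (φ t ^ (-(2 * d)) * (-(2 * d * b * (1 - φ t)) / φ t)) t :=
    (hφ.rpow_const (Or.inl hp.ne')).congr_deriv (by rw [rpow_sub_one hp.ne']; ring)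
  have hdiv : ∀ z : ℝ, HasDerivAt (fun s => z / φ s) (-(b * (1 - φ t) * z) / φ t ^ 2) t :=
    fun z => ((hasDerivAt_const t z).div hφ hp.ne').congr_deriv (by ring)
  have hE : HasDerivAt (fun s => exp (2 * b * (1 - φ s) * (y / φ s)))
      (exp (2 * b * (1 - φ t) * (y / φ t)) * (-(2 * b ^ 2 * (1 - φ t) * y) / φ t ^ 2)) t :=
    (((hφ.const_sub 1).const_mul (2 * b)).mul (hdiv y)).exp.congr_deriv
      (by simp only [Pi.mul_apply]; field_simp; ring)
  have hU := hasDerivAt_comp₃ hu (hdiv x) (hdiv y) (hasDerivAt_lsTime hb hφ hp)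
  exact ((hA.mul hE).mul hU).congr_deriv (by simp only [Pi.mul_apply]; field_simp; ring)

end Transform

section Gauge

variable (b d : ℝ) (φ : ℝ → ℝ) (u : ℝ → ℝ → ℝ → ℝ) (ξ η t : ℝ)

theorem pdX_lsGauge :
    pdX (lsGauge b d φ u) ξ η t =
      φ t ^ (-(2 * d)) * exp (2 * b * (1 - φ t) * η) * pdX u ξ η (lsTime b φ t) :=
  deriv_const_mul_field _

theorem pdXX_lsGauge :
    pdXX (lsGauge b d φ u) ξ η t =
      φ t ^ (-(2 * d)) * exp (2 * b * (1 - φ t) * η) * pdXX u ξ η (lsTime b φ t) := by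
  simp only [pdXX, pdX_lsGauge]
  exact deriv_const_mul_field _

variable {b d φ u ξ η t}

theorem pdY_lsGauge (hu : DifferentiableAt ℝ (fun η => u ξ η (lsTime b φ t)) η) :
    pdY (lsGauge b d φ u) ξ η t =
      φ t ^ (-(2 * d)) * exp (2 * b * (1 - φ t) * η) *
        (2 * b * (1 - φ t) * u ξ η (lsTime b φ t) + pdY u ξ η (lsTime b φ t)) :=
  (hu.hasDerivAt.const_mul_exp_mul _ _).deriv

theorem pdYY_lsGauge (hu : ContDiffAt ℝ 2 (fun η => u ξ η (lsTime b φ t)) η) :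
    pdYY (lsGauge b d φ u) ξ η t =
      φ t ^ (-(2 * d)) * exp (2 * b * (1 - φ t) * η) *
        ((2 * b * (1 - φ t)) ^ 2 * u ξ η (lsTime b φ t) +
          2 * (2 * b * (1 - φ t)) * pdY u ξ η (lsTime b φ t) + pdYY u ξ η (lsTime b φ t)) :=
  deriv_deriv_const_mul_exp_mul _ _ hu

end Gauge

theorem isOpen_Omega : IsOpen Omega :=
  (isOpen_lt continuous_const continuous_fst).inter
    (isOpen_lt continuous_const (continuous_fst.comp continuous_snd))

theorem IsLSSolution.contDiffAt {a b d e : ℝ} {u : ℝ → ℝ → ℝ → ℝ} (hu : IsLSSolution a b d e u)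
    {x y : ℝ} (hx : 0 < x) (hy : 0 < y) (t : ℝ) :
    ContDiffAt ℝ 2 (fun p : ℝ × ℝ × ℝ => u p.1 p.2.1 p.2.2) (x, y, t) :=
  hu.1.contDiffAt (isOpen_Omega.mem_nhds ⟨hx, hy⟩)

theorem lsEq_lsTransform {a b d : ℝ} {φ : ℝ → ℝ} {u : ℝ → ℝ → ℝ → ℝ} {x y t : ℝ} (hb : b ≠ 0)
    (hu : IsLSSolution a b d (-b) u) (hφ : HasDerivAt φ (b * (1 - φ t)) t) (hp : 0 < φ t)
    (hx : 0 < x) (hy : 0 < y) :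
    LSEq a b d (-b) (lsTransform b d φ u) x y t := by
  have hξ : 0 < x / φ t := div_pos hx hp
  have hη : 0 < y / φ t := div_pos hy hp
  have hC2 := hu.contDiffAt hξ hη (lsTime b φ t)
  have hslice : ContDiffAt ℝ 2 (fun η => u (x / φ t) η (lsTime b φ t)) (y / φ t) :=
    hC2.comp (f := fun η => (x / φ t, η, lsTime b φ t)) _ (by fun_prop)
  have heq := hu.2 _ _ (lsTime b φ t) hξ hη
  unfold LSEq at heq ⊢
  rw [pdT, (hasDerivAt_lsTransform_time hb hφ hp (hC2.differentiableAt two_ne_zero)).deriv]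
  unfold lsTransform
  rw [pdX_comp_div, pdY_comp_div, pdXX_comp_div, pdYY_comp_div, pdX_lsGauge,
    pdXX_lsGauge, pdY_lsGauge (hslice.differentiableAt two_ne_zero), pdYY_lsGauge hslice, heq]
  field_simp
  ring

/-- Symmetry of the Longstaff–Schwartz equation when `b = −e ≠ 0` (subcase 2.3, group `G₂`). -/
theorem ls_symmetry_b_eq_neg_e_G2 (a b d e : ℝ) (hbe : b = -e) (hb : b ≠ 0)
    (u : ℝ → ℝ → ℝ → ℝ) (hu : IsLSSolution a b d e u) (ε : ℝ) :
    ∀ x y t : ℝ, 0 < x → 0 < y → 1 - b * ε * Real.exp (-(b * t)) > 0 →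
      LSEq a b d e
        (fun x y t =>
          (1 - b * ε * Real.exp (-(b * t))) ^ (-(2 * d)) *
            Real.exp (2 * b ^ 2 * ε * Real.exp (-(b * t)) * y /
              (1 - b * ε * Real.exp (-(b * t)))) *
            u (x / (1 - b * ε * Real.exp (-(b * t)))) (y / (1 - b * ε * Real.exp (-(b * t))))
              (t + Real.log (1 - b * ε * Real.exp (-(b * t))) / b))
        x y t := by
  intro x y t hx hy hp
  obtain rfl : e = -b := by linarith
  set φ : ℝ → ℝ := fun s => 1 - b * ε * exp (-(b * s))
  have hφ : HasDerivAt φ (b * (1 - φ t)) t :=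
    ((((hasDerivAt_id' t).const_mul b).neg.exp.const_mul (b * ε)).const_sub 1).congr_deriv
      (by simp only [Pi.neg_apply, φ]; ring)
  convert lsEq_lsTransform hb hu hφ hp hx hy using 1
  funext x y s
  simp only [lsTransform, lsGauge, lsTime, φ]
  -- only the exponents differ, and `2b²ε e^{−bs} = 2b(1 − φ s)`
  congr 3
  ring
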